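/- Let G_∞=(V_∞,E_∞) be an infinite, locally finite, bounded-degree connected graph with 0-1 KCSM constraints {c_x} of finite range r, fix a vertex v∈V_∞ and let B_n be the ball of radius n around v. For each n let gap_n^max be the spectral gap of the chain on {0,1}^{B_n} with constraints c^max_{x,B_n}(ω) := c_x(ω·0_{V_∞∖B_n}) (all spins outside B_n frozen to the good value 0), and let gap(L) := inf of D(f)/Var_μ(f) over nonconstant functions f on {0,1}^{V_∞} depending on finitely many coordinates, with D(f)=Σ_{x∈V_∞} μ(c_x·Var_x f). Then gap(L) ≥ inf_n gap_n^max; in particular, if inf_n gap_n^max > 0 then gap(L) > 0. -/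

import Mathlib

open scoped Classical BigOperators

noncomputable section

/-- Indicator of a proposition. -/
def ind (P : Prop) : ℝ := if P then 1 else 0

variable {ι : Type*} [DecidableEq ι]

/-- Extend a configuration defined on the finite set `S` by `true` (occupied) elsewhere. -/
def extCfg (S : Finset ι) (σ : {x // x ∈ S} → Bool) : ι → Bool :=
  fun x => if h : x ∈ S then σ ⟨x, h⟩ else true

/-- Product Bernoulli weight of a local configuration: each site is empty (`false`)
with probability `q` and occupied (`true`) with probability `1 - q`. -/
def cylWeight (q : ℝ) (S : Finset ι) (σ : {x // x ∈ S} → Bool) : ℝ :=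
  ∏ x : {x // x ∈ S}, (if σ x then 1 - q else q)

/-- Expectation (under the Bernoulli(1-q) product measure) of a function depending
only on the coordinates in `S`. -/
def cylExp (q : ℝ) (S : Finset ι) (f : (ι → Bool) → ℝ) : ℝ :=
  ∑ σ : {x // x ∈ S} → Bool, cylWeight q S σ * f (extCfg S σ)

/-- `f` depends only on the coordinates in `S`. -/
def DependsOnCoords (f : (ι → Bool) → ℝ) (S : Finset ι) : Prop :=
  ∀ ω ω' : ι → Bool, (∀ x ∈ S, ω x = ω' x) → f ω = f ω'

/-- The local variance `Var_x f (ω) = p q (f(ω^{x←1}) - f(ω^{x←0}))²`, `p = 1 - q`. -/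
def varAt (q : ℝ) (f : (ι → Bool) → ℝ) (x : ι) (ω : ι → Bool) : ℝ :=
  (1 - q) * q * (f (Function.update ω x true) - f (Function.update ω x false)) ^ 2

/-- Variance of a function depending only on the coordinates in `S`. -/
def cylVar (q : ℝ) (S : Finset ι) (f : (ι → Bool) → ℝ) : ℝ :=
  cylExp q S (fun ω => (f ω) ^ 2) - (cylExp q S f) ^ 2

/-- Dirichlet form `D(f) = Σ_x μ(c_x · Var_x f)` of a function depending only on the
coordinates in `S`, for constraints `c` such that `c x` depends only on the coordinates
in `supp x`. -/
def dirichlet (q : ℝ) (c : ι → (ι → Bool) → Prop) (supp : ι → Finset ι)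
    (S : Finset ι) (f : (ι → Bool) → ℝ) : ℝ :=
  ∑' x : ι, cylExp q (insert x (S ∪ supp x)) (fun ω => ind (c x ω) * varAt q f x ω)

/-- The spectral gap of the kinetically constrained model with constraints `c`
(the constraint at `x` depending only on the coordinates in `supp x`):
the infimum of `D(f)/Var(f)` over nonconstant functions depending on finitely many
coordinates. -/
def kcmGap (q : ℝ) (c : ι → (ι → Bool) → Prop) (supp : ι → Finset ι) : ℝ :=
  sInf { γ : ℝ | ∃ (f : (ι → Bool) → ℝ) (S : Finset ι),
    DependsOnCoords f S ∧ (∃ ω ω', f ω ≠ f ω') ∧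
    γ = dirichlet q c supp S f / cylVar q S f }

/-- The spectral gap of the East model on `ℤ` at parameter `q`. -/
def eastGap (q : ℝ) : ℝ :=
  kcmGap q (fun (x : ℤ) ω => ω (x + 1) = false) (fun x => {x + 1})

end

noncomputable section
open scoped Classical

variable {ι : Type*} [DecidableEq ι]

/-- Constraint in the region `Λ` with maximal boundary condition: all spins outside `Λ`
are frozen to the good value `0` (`false`). -/
def frozenC (c : ι → (ι → Bool) → Prop) (Λ : Set ι) (x : ι) (ω : ι → Bool) : Prop :=
  c x (fun y => if y ∈ Λ then ω y else false)

/-- Dirichlet form of the chain in the region `Λ` with maximal boundary condition. -/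
def dirichletOn (q : ℝ) (c : ι → (ι → Bool) → Prop) (supp : ι → Finset ι) (Λ : Set ι)
    (S : Finset ι) (f : (ι → Bool) → ℝ) : ℝ :=
  ∑' x : Λ, cylExp q (insert (x : ι) (S ∪ supp (x : ι)))
    (fun ω => ind (frozenC c Λ (x : ι) ω) * varAt q f (x : ι) ω)

/-- Spectral gap of the chain in the region `Λ` with maximal boundary condition
(spins outside `Λ` frozen to `0`). -/
def gapOn (q : ℝ) (c : ι → (ι → Bool) → Prop) (supp : ι → Finset ι) (Λ : Set ι) : ℝ :=
  sInf { γ : ℝ | ∃ (f : (ι → Bool) → ℝ) (S : Finset ι), ↑S ⊆ Λ ∧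
    DependsOnCoords f S ∧ (∃ ω ω', f ω ≠ f ω') ∧
    γ = dirichletOn q c supp Λ S f / cylVar q S f }

end

/-!
Every function `f` entering the infinite-volume gap depends on a finite set `S` of sites.
On a ball `B_n` containing `S` together with the range-`r` neighbourhood of `S`, the
constraints at the sites of `S` never see the frozen boundary, and `Var_x f = 0` off `S`;
hence the Dirichlet form of `f` on `B_n` with maximal boundary condition is the
infinite-volume one, and `gap_n^max ≤ D(f) / Var(f)`.
-/

section

variable {ι : Type*} {q : ℝ}

lemma ind_nonneg (P : Prop) : 0 ≤ ind P := by
  unfold ind; split <;> norm_num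

lemma cylWeight_nonneg (hq₀ : 0 ≤ q) (hq₁ : q ≤ 1) (S : Finset ι)
    (σ : {x // x ∈ S} → Bool) : 0 ≤ cylWeight q S σ :=
  Finset.prod_nonneg fun x _ => by split <;> linarith

def IsLocalConstraint (c : ι → (ι → Bool) → Prop) (supp : ι → Finset ι) : Prop :=
  ∀ x ω ω', (∀ y ∈ supp x, ω y = ω' y) → (c x ω ↔ c x ω')

lemma IsLocalConstraint.frozenC_iff {c : ι → (ι → Bool) → Prop} {supp : ι → Finset ι}
    {Λ : Set ι} (hc : IsLocalConstraint c supp) {x : ι}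
    (hx : ↑(supp x) ⊆ Λ) (ω : ι → Bool) : frozenC c Λ x ω ↔ c x ω :=
  hc x _ _ fun _ hy => if_pos (hx hy)

variable [DecidableEq ι]

lemma sum_cylWeight (q : ℝ) (S : Finset ι) :
    ∑ σ : {x // x ∈ S} → Bool, cylWeight q S σ = 1 := by
  unfold cylWeight
  rw [← Fintype.prod_sum (fun (_ : {x // x ∈ S}) (b : Bool) => if b then 1 - q else q)]
  simp

lemma cylExp_nonneg (hq₀ : 0 ≤ q) (hq₁ : q ≤ 1) (S : Finset ι)
    {f : (ι → Bool) → ℝ} (hf : ∀ ω, 0 ≤ f ω) : 0 ≤ cylExp q S f :=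
  Finset.sum_nonneg fun σ _ => mul_nonneg (cylWeight_nonneg hq₀ hq₁ S σ) (hf _)

lemma cylExp_zero (q : ℝ) (S : Finset ι) : cylExp q S (fun _ => 0) = 0 := by
  simp [cylExp]

lemma cylVar_nonneg (hq₀ : 0 ≤ q) (hq₁ : q ≤ 1) (S : Finset ι) (f : (ι → Bool) → ℝ) :
    0 ≤ cylVar q S f := by
  have jensen := (even_two.convexOn_pow (𝕜 := ℝ)).map_sum_le
    (fun σ _ => cylWeight_nonneg hq₀ hq₁ S σ) (sum_cylWeight q S)
    (fun σ _ => Set.mem_univ (f (extCfg S σ)))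
  simp only [smul_eq_mul] at jensen
  rw [cylVar, sub_nonneg, cylExp, cylExp]
  exact jensen

lemma varAt_nonneg (hq₀ : 0 ≤ q) (hq₁ : q ≤ 1) (f : (ι → Bool) → ℝ) (x : ι)
    (ω : ι → Bool) : 0 ≤ varAt q f x ω :=
  mul_nonneg (mul_nonneg (by linarith) hq₀) (sq_nonneg _)

lemma varAt_eq_zero_of_notMem {f : (ι → Bool) → ℝ} {S : Finset ι}
    (hf : DependsOnCoords f S) {x : ι} (hx : x ∉ S) (q : ℝ) (ω : ι → Bool) :
    varAt q f x ω = 0 := by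
  have hupdate : ∀ b : Bool, f (Function.update ω x b) = f ω := fun b =>
    hf _ _ fun y hy => Function.update_of_ne (ne_of_mem_of_not_mem hy hx) _ _
  simp [varAt, hupdate]

lemma dirichletOn_nonneg (hq₀ : 0 ≤ q) (hq₁ : q ≤ 1) (c : ι → (ι → Bool) → Prop)
    (supp : ι → Finset ι) (Λ : Set ι) (S : Finset ι) (f : (ι → Bool) → ℝ) :
    0 ≤ dirichletOn q c supp Λ S f :=
  tsum_nonneg fun x => cylExp_nonneg hq₀ hq₁ _ fun ω =>
    mul_nonneg (ind_nonneg _) (varAt_nonneg hq₀ hq₁ f x ω)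

lemma gapOn_nonneg (hq₀ : 0 ≤ q) (hq₁ : q ≤ 1) (c : ι → (ι → Bool) → Prop)
    (supp : ι → Finset ι) (Λ : Set ι) : 0 ≤ gapOn q c supp Λ := by
  refine Real.sInf_nonneg ?_
  rintro _ ⟨f, S, -, -, -, rfl⟩
  exact div_nonneg (dirichletOn_nonneg hq₀ hq₁ c supp Λ S f) (cylVar_nonneg hq₀ hq₁ S f)

lemma le_kcmGap [Nonempty ι] {c : ι → (ι → Bool) → Prop} {supp : ι → Finset ι} {γ : ℝ}
    (h : ∀ f S, DependsOnCoords f S → (∃ ω ω', f ω ≠ f ω') →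
      γ ≤ dirichlet q c supp S f / cylVar q S f) :
    γ ≤ kcmGap q c supp := by
  obtain ⟨i⟩ := ‹Nonempty ι›
  have hdep : DependsOnCoords (fun ω => ind (ω i)) {i} := fun ω ω' hω => by
    simp only [hω i (Finset.mem_singleton_self i)]
  refine le_csInf ⟨_, _, _, hdep, ⟨fun _ => true, fun _ => false, by simp [ind]⟩, rfl⟩ ?_
  rintro _ ⟨f, S, hf, hnc, rfl⟩
  exact h f S hf hnc

lemma isLocalConstraint_kcsm (C : ι → Finset (Finset ι)) :
    IsLocalConstraint (fun x ω => ∃ A ∈ C x, ∀ y ∈ A, ω y = false)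
      (fun x => (C x).sup id) := by
  intro x ω ω' hω
  refine exists_congr fun A => and_congr_right fun hA => forall₂_congr fun y hy => ?_
  rw [hω y (Finset.mem_sup.2 ⟨A, hA, hy⟩)]

variable {c : ι → (ι → Bool) → Prop} {supp : ι → Finset ι} {Λ : Set ι}

lemma dirichletOn_eq_dirichlet (hc : IsLocalConstraint c supp) {S : Finset ι}
    {f : (ι → Bool) → ℝ} (hf : DependsOnCoords f S) (hSΛ : ↑S ⊆ Λ)
    (hsupp : ∀ x ∈ S, ↑(supp x) ⊆ Λ) :
    dirichletOn q c supp Λ S f = dirichlet q c supp S f := by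
  have hoff : ∀ x ∉ S, ∀ (P : (ι → Bool) → Prop) (T : Finset ι),
      cylExp q T (fun ω => ind (P ω) * varAt q f x ω) = 0 := fun x hx P T => by
    simp only [varAt_eq_zero_of_notMem hf hx, mul_zero, cylExp_zero]
  rw [dirichletOn, dirichlet, tsum_subtype Λ fun x => cylExp q (insert x (S ∪ supp x))
    fun ω => ind (frozenC c Λ x ω) * varAt q f x ω]
  congr 1
  funext x
  by_cases hxS : x ∈ S
  · rw [Set.indicator_of_mem (hSΛ hxS)]
    simp only [ind, hc.frozenC_iff (hsupp x hxS)]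
  · by_cases hxΛ : x ∈ Λ
    · rw [Set.indicator_of_mem hxΛ, hoff x hxS, hoff x hxS]
    · rw [Set.indicator_of_notMem hxΛ, hoff x hxS]

lemma gapOn_le_dirichlet_div_cylVar (hq₀ : 0 ≤ q) (hq₁ : q ≤ 1)
    (hc : IsLocalConstraint c supp) {S : Finset ι} {f : (ι → Bool) → ℝ}
    (hf : DependsOnCoords f S) (hnc : ∃ ω ω', f ω ≠ f ω') (hSΛ : ↑S ⊆ Λ)
    (hsupp : ∀ x ∈ S, ↑(supp x) ⊆ Λ) :
    gapOn q c supp Λ ≤ dirichlet q c supp S f / cylVar q S f := by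
  rw [← dirichletOn_eq_dirichlet hc hf hSΛ hsupp]
  refine csInf_le ⟨0, ?_⟩ ⟨f, S, hSΛ, hf, hnc, rfl⟩
  rintro _ ⟨g, T, -, -, -, rfl⟩
  exact div_nonneg (dirichletOn_nonneg hq₀ hq₁ c supp Λ T g) (cylVar_nonneg hq₀ hq₁ T g)

end

open scoped Classical in
theorem gap_ge_iInf_ball_gaps_general {V : Type*} [DecidableEq V]
    (G : SimpleGraph V) (hconn : G.Connected)
    (C : V → Finset (Finset V))
    (r : ℕ) (hp2 : ∀ x, ∀ A ∈ C x, ∀ y ∈ A, G.dist x y ≤ r)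
    (v : V) (q : ℝ) (hq : q ∈ Set.Ioo (0 : ℝ) 1) :
    (⨅ n : ℕ, gapOn q (fun x ω => ∃ A ∈ C x, ∀ y ∈ A, ω y = false)
        (fun x => (C x).sup id) {y : V | G.dist v y ≤ n}) ≤
      kcmGap q (fun x ω => ∃ A ∈ C x, ∀ y ∈ A, ω y = false) (fun x => (C x).sup id) ∧
    (0 < (⨅ n : ℕ, gapOn q (fun x ω => ∃ A ∈ C x, ∀ y ∈ A, ω y = false)
        (fun x => (C x).sup id) {y : V | G.dist v y ≤ n}) →
      0 < kcmGap q (fun x ω => ∃ A ∈ C x, ∀ y ∈ A, ω y = false) (fun x => (C x).sup id)) := by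
  set c : V → (V → Bool) → Prop := fun x ω => ∃ A ∈ C x, ∀ y ∈ A, ω y = false
  set supp : V → Finset V := fun x => (C x).sup id
  have hq₀ : 0 ≤ q := hq.1.le
  have hq₁ : q ≤ 1 := hq.2.le
  have : Nonempty V := ⟨v⟩
  have hbdd : BddBelow (Set.range fun n : ℕ => gapOn q c supp {y | G.dist v y ≤ n}) :=
    ⟨0, Set.forall_mem_range.2 fun n => gapOn_nonneg hq₀ hq₁ _ _ _⟩
  have hle := le_kcmGap fun f S hf hnc => by
    set N := S.sup (G.dist v)
    have hS : ∀ x ∈ S, G.dist v x ≤ N := fun x hx => Finset.le_sup (f := G.dist v) hx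
    refine (ciInf_le hbdd (N + r)).trans <|
      gapOn_le_dirichlet_div_cylVar hq₀ hq₁ (isLocalConstraint_kcsm C) hf hnc
        (fun x hx => le_add_right (hS x hx)) fun x hx y hy => ?_
    obtain ⟨A, hA, hyA⟩ := Finset.mem_sup.1 hy
    exact hconn.dist_triangle.trans (add_le_add (hS x hx) (hp2 x A hA y hyA))
  exact ⟨hle, fun h => h.trans_le hle⟩

open scoped Classical in
/-- For a 0-1 KCSM on an infinite, locally finite, bounded-degree
connected graph with finite-range constraints, the infinite-volume spectral gap is at
least the infimum over `n` of the finite-volume gaps on the balls `B_n` with maximal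
(all `0`) boundary conditions; in particular, if the latter infimum is positive then so
is the infinite-volume gap. -/
theorem gap_ge_iInf_ball_gaps {V : Type*} [DecidableEq V] [Infinite V]
    (G : SimpleGraph V) [G.LocallyFinite] (hconn : G.Connected)
    (D : ℕ) (hdeg : ∀ x, G.degree x ≤ D)
    (C : V → Finset (Finset V))
    (hp1 : ∀ x, ∀ A ∈ C x, x ∉ A)
    (r : ℕ) (hp2 : ∀ x, ∀ A ∈ C x, ∀ y ∈ A, G.dist x y ≤ r)
    (v : V) (q : ℝ) (hq : q ∈ Set.Ioo (0 : ℝ) 1) :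
    (⨅ n : ℕ, gapOn q (fun x ω => ∃ A ∈ C x, ∀ y ∈ A, ω y = false)
        (fun x => (C x).sup id) {y : V | G.dist v y ≤ n}) ≤
      kcmGap q (fun x ω => ∃ A ∈ C x, ∀ y ∈ A, ω y = false) (fun x => (C x).sup id) ∧
    (0 < (⨅ n : ℕ, gapOn q (fun x ω => ∃ A ∈ C x, ∀ y ∈ A, ω y = false)
        (fun x => (C x).sup id) {y : V | G.dist v y ≤ n}) →
      0 < kcmGap q (fun x ω => ∃ A ∈ C x, ∀ y ∈ A, ω y = false) (fun x => (C x).sup id)) :=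
  gap_ge_iInf_ball_gaps_general G hconn C r hp2 v q hq
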